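/- (Sharpness construction, non-uniqueness.) With $\Phi x = (1-t/4)^{-1/2}(x - \langle x_1, x\rangle x_1)$ as above, let $x_0 \in \mathbb{R}^N$ have ones in its first $s$ blocks (of size $d$) and zeros elsewhere, and $\hat{x} \in \mathbb{R}^N$ have $-1$ entries in blocks $s+1$ through $2s$ and zeros elsewhere. Then $x_0$ and $\hat{x}$ are distinct block $s$-sparse vectors with $\|x_0\|_{2,\mathcal{I}} = \|\hat{x}\|_{2,\mathcal{I}} = s\sqrt{d}$ and $\Phi x_0 = \Phi \hat{x}$; consequently the $\ell_2/\ell_1$ minimization $\min \|z\|_{2,\mathcal{I}}$ subject to $\Phi z = \Phi x_0$ cannot uniquely recover $x_0$. -/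

import Mathlib

/-!
`x₀ - x̂` is the indicator of the first `2s` blocks, i.e. `√(2sd) x₁`, and `Φ` kills the unit
vector `x₁`; hence `Φ x₀ = Φ x̂`. Each of `x₀`, `x̂` has exactly `s` nonzero blocks, all of norm
`√d`, so `x̂` is a second minimizer of the `ℓ₂/ℓ₁` problem.
-/

open Finset

/-- The space of block-structured vectors in `ℝ^N`, where `N = d 0 + ⋯ + d (l-1)`:
block `i` lives in `ℝ^(d i)` and the whole space carries the `ℓ₂` norm. -/
abbrev BlockVec {l : ℕ} (d : Fin l → ℕ) :=
  PiLp 2 (fun i : Fin l => EuclideanSpace ℝ (Fin (d i)))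

/-- `x` is block `s`-sparse: at most `s` nonzero blocks. -/
def BlockSparse {l : ℕ} {d : Fin l → ℕ} (s : ℕ) (x : BlockVec d) : Prop :=
  ∃ S : Finset (Fin l), S.card ≤ s ∧ ∀ i ∉ S, x i = 0

/-- The mixed `ℓ₂/ℓ₁` norm `‖x‖_{2,ℐ} = ∑ i, ‖x[i]‖₂`. -/
noncomputable def blockL1 {l : ℕ} {d : Fin l → ℕ} (x : BlockVec d) : ℝ :=
  ∑ i, ‖x i‖

/-- `x_S`: keep the blocks indexed by `S`, zero out the rest. -/
def blockRestrict {l : ℕ} {d : Fin l → ℕ} (x : BlockVec d) (S : Finset (Fin l)) :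
    BlockVec d := WithLp.toLp 2 fun i => if i ∈ S then x i else 0

/-- The unit vector `x₁ = (2sd)^{-1/2}(1,…,1,0,…,0)ᵀ`, with ones filling the first `2s`
blocks (each of size `dsize`). -/
noncomputable def x1Vec {l : ℕ} (s dsize : ℕ) (d : Fin l → ℕ) : BlockVec d :=
  WithLp.toLp 2 fun (i : Fin l) => WithLp.toLp 2 fun (_ : Fin (d i)) => if (i : ℕ) < 2 * s then (Real.sqrt (2 * s * dsize))⁻¹ else 0

/-- The linear transformation `Φ x = (1 - t/4)^{-1/2} (x - ⟨x₁, x⟩ x₁)`. -/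
noncomputable def PhiMap {l : ℕ} {d : Fin l → ℕ} (t : ℝ) (x1 : BlockVec d)
    (x : BlockVec d) : BlockVec d :=
  (Real.sqrt (1 - t / 4))⁻¹ • (x - (inner ℝ x1 x : ℝ) • x1)

/-- `x₀`: ones in the first `s` blocks, zeros elsewhere. -/
noncomputable def x0Vec {l : ℕ} (s : ℕ) (d : Fin l → ℕ) : BlockVec d :=
  WithLp.toLp 2 fun (i : Fin l) => WithLp.toLp 2 fun (_ : Fin (d i)) => if (i : ℕ) < s then (1 : ℝ) else 0

/-- `x̂`: entries `-1` in blocks `s+1` through `2s`, zeros elsewhere. -/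
noncomputable def xhatVec {l : ℕ} (s : ℕ) (d : Fin l → ℕ) : BlockVec d :=
  WithLp.toLp 2 fun (i : Fin l) => WithLp.toLp 2 fun (_ : Fin (d i)) => if s ≤ (i : ℕ) ∧ (i : ℕ) < 2 * s then (-1 : ℝ) else 0

theorem Fin.card_filter_le_val_lt {n a b : ℕ} (hb : b ≤ n) :
    #{i : Fin n | a ≤ (i : ℕ) ∧ (i : ℕ) < b} = b - a := by
  rw [← Nat.card_Ico, ← card_map Fin.valEmbedding]
  congr 1
  ext k
  simp only [mem_map, mem_filter, mem_univ, true_and, Fin.valEmbedding_apply, mem_Ico]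
  exact ⟨by rintro ⟨i, hi, rfl⟩; exact hi, fun hk => ⟨⟨k, by omega⟩, hk, rfl⟩⟩

theorem Fin.sum_ite_le_val_lt {M : Type*} [AddCommMonoid M] {n a b : ℕ} (hb : b ≤ n)
    {f : Fin n → M} {c : M} (hf : ∀ i : Fin n, a ≤ (i : ℕ) → (i : ℕ) < b → f i = c) :
    ∑ i : Fin n, (if a ≤ (i : ℕ) ∧ (i : ℕ) < b then f i else 0) = (b - a) • c := by
  rw [← sum_filter, sum_congr rfl fun i hi => hf i (mem_filter.1 hi).2.1 (mem_filter.1 hi).2.2,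
    Finset.sum_const, Fin.card_filter_le_val_lt hb]

section BlockConst

variable {l : ℕ} (d : Fin l → ℕ)

noncomputable def blockConst (c : Fin l → ℝ) : BlockVec d :=
  WithLp.toLp 2 fun i => WithLp.toLp 2 fun _ => c i

variable {d}

@[simp]
theorem blockConst_apply_apply (c : Fin l → ℝ) (i : Fin l) (j : Fin (d i)) :
    blockConst d c i j = c i := rfl

theorem blockConst_sub (c c' : Fin l → ℝ) :
    blockConst d c - blockConst d c' = blockConst d (c - c') := rfl

theorem norm_blockConst_apply (c : Fin l → ℝ) (i : Fin l) :
    ‖blockConst d c i‖ = |c i| * √(d i) := by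
  simp [blockConst, EuclideanSpace.norm_eq, Real.sqrt_sq_eq_abs, mul_comm]

theorem inner_blockConst (c c' : Fin l → ℝ) :
    inner ℝ (blockConst d c) (blockConst d c') = ∑ i, d i * (c i * c' i) := by
  simp [PiLp.inner_apply, mul_comm]

theorem blockL1_blockConst (c : Fin l → ℝ) :
    blockL1 (blockConst d c) = ∑ i, |c i| * √(d i) := by
  simp only [blockL1, norm_blockConst_apply]

theorem blockSparse_blockConst {s : ℕ} {c : Fin l → ℝ} {S : Finset (Fin l)} (hS : #S ≤ s)
    (hc : ∀ i ∉ S, c i = 0) : BlockSparse s (blockConst d c) :=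
  ⟨S, hS, fun i hi => by ext j; simp [hc i hi]⟩

end BlockConst

section PhiMap

variable {l : ℕ} {d : Fin l → ℕ} (t : ℝ) {x1 : BlockVec d}

theorem PhiMap_sub (x y : BlockVec d) : PhiMap t x1 (x - y) = PhiMap t x1 x - PhiMap t x1 y := by
  simp only [PhiMap, inner_sub_right, sub_smul, ← smul_sub]
  congr 1
  abel

theorem PhiMap_smul_self (hx1 : inner ℝ x1 x1 = (1 : ℝ)) (a : ℝ) :
    PhiMap t x1 (a • x1) = 0 := by
  simp only [PhiMap, real_inner_smul_right, hx1, mul_one, sub_self, smul_zero]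

theorem PhiMap_eq_of_sub_eq_smul (hx1 : inner ℝ x1 x1 = (1 : ℝ)) {x y : BlockVec d} {a : ℝ}
    (h : x - y = a • x1) : PhiMap t x1 x = PhiMap t x1 y := by
  rw [← sub_eq_zero, ← PhiMap_sub, h, PhiMap_smul_self t hx1]

end PhiMap

section Construction

variable {l s dsize : ℕ} {d : Fin l → ℕ}

theorem x0Vec_eq_blockConst : x0Vec s d = blockConst d fun i => if (i : ℕ) < s then 1 else 0 :=
  rfl

theorem xhatVec_eq_blockConst :
    xhatVec s d = blockConst d fun i => if s ≤ (i : ℕ) ∧ (i : ℕ) < 2 * s then -1 else 0 :=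
  rfl

theorem x1Vec_eq_smul_blockConst :
    x1Vec s dsize d =
      (√(2 * s * dsize))⁻¹ • blockConst d fun i => if (i : ℕ) < 2 * s then 1 else 0 := by
  ext i j
  simp [x1Vec]

theorem x0Vec_sub_xhatVec (hs : 0 < s) (hd : 0 < dsize) :
    x0Vec s d - xhatVec s d = √(2 * s * dsize) • x1Vec s dsize d := by
  have hpos : (0 : ℝ) < 2 * s * dsize := by positivity
  rw [x1Vec_eq_smul_blockConst, smul_inv_smul₀ (Real.sqrt_pos.2 hpos).ne', x0Vec_eq_blockConst,
    xhatVec_eq_blockConst, blockConst_sub]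
  congr 1
  funext i
  simp only [Pi.sub_apply]
  split_ifs <;> norm_num <;> omega

theorem x0Vec_ne_xhatVec {i : Fin l} (hi : (i : ℕ) < s) (hdi : 0 < d i) :
    x0Vec s d ≠ xhatVec s d := by
  intro h
  have hij := congr($h i ⟨0, hdi⟩)
  simp [x0Vec_eq_blockConst, xhatVec_eq_blockConst, hi, not_le.2 hi] at hij

theorem blockSparse_x0Vec : BlockSparse s (x0Vec s d) :=
  blockSparse_blockConst (S := {i | (i : ℕ) < s})
    (Fin.card_filter_val_lt.trans_le (min_le_right _ _))
    fun i hi => if_neg (by simpa using hi)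

theorem blockSparse_xhatVec (hl : 2 * s ≤ l) : BlockSparse s (xhatVec s d) :=
  blockSparse_blockConst (S := {i | s ≤ (i : ℕ) ∧ (i : ℕ) < 2 * s})
    (by rw [Fin.card_filter_le_val_lt hl]; omega) fun i hi => if_neg (by simpa using hi)

variable (hl : 2 * s ≤ l) (hfirst : ∀ i : Fin l, (i : ℕ) < 2 * s → d i = dsize)
include hl hfirst

theorem inner_x1Vec_self (hs : 0 < s) (hd : 0 < dsize) :
    inner ℝ (x1Vec s dsize d) (x1Vec s dsize d) = (1 : ℝ) := by
  have hpos : (0 : ℝ) < 2 * s * dsize := by positivity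
  rw [x1Vec_eq_smul_blockConst, real_inner_smul_left, real_inner_smul_right, inner_blockConst]
  have h := Fin.sum_ite_le_val_lt (a := 0) hl (f := fun i => (d i : ℝ)) (c := (dsize : ℝ))
    fun i _ hi => by rw [hfirst i hi]
  simp only [zero_le, true_and, tsub_zero] at h
  simp only [← ite_and, and_self, mul_ite, mul_one, mul_zero]
  rw [h, nsmul_eq_mul, ← mul_assoc, ← sq, inv_pow, Real.sq_sqrt hpos.le]
  push_cast
  field_simp

theorem blockL1_x0Vec : blockL1 (x0Vec s d) = s * √dsize := by
  have h := Fin.sum_ite_le_val_lt (a := 0) (b := s) (by omega) (f := fun i => √(d i : ℝ))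
    (c := √dsize) fun i _ hi => by rw [hfirst i (by omega)]
  simp only [zero_le, true_and, tsub_zero, nsmul_eq_mul] at h
  rw [x0Vec_eq_blockConst, blockL1_blockConst, ← h]
  congr 1
  funext i
  split_ifs <;> simp

theorem blockL1_xhatVec : blockL1 (xhatVec s d) = s * √dsize := by
  have h := Fin.sum_ite_le_val_lt (a := s) (b := 2 * s) hl (f := fun i => √(d i : ℝ))
    (c := √dsize) fun i _ hi => by rw [hfirst i hi]
  rw [show 2 * s - s = s by omega, nsmul_eq_mul] at h
  rw [xhatVec_eq_blockConst, blockL1_blockConst, ← h]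
  congr 1
  funext i
  split_ifs <;> simp

end Construction

theorem sharpness_nonuniqueness_general {l : ℕ} (s dsize : ℕ) (d : Fin l → ℕ)
    (hd : 0 < dsize) (hs : 1 ≤ s) (hl : 2 * s < l)
    (hfirst : ∀ i : Fin l, (i : ℕ) < 2 * s → d i = dsize)
    (t : ℝ) :
    x0Vec s d ≠ xhatVec s d ∧
    BlockSparse s (x0Vec s d) ∧ BlockSparse s (xhatVec s d) ∧
    blockL1 (x0Vec s d) = s * Real.sqrt dsize ∧
    blockL1 (xhatVec s d) = s * Real.sqrt dsize ∧
    PhiMap t (x1Vec s dsize d) (x0Vec s d) = PhiMap t (x1Vec s dsize d) (xhatVec s d) ∧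
    ∃ z : BlockVec d, z ≠ x0Vec s d ∧
      PhiMap t (x1Vec s dsize d) z = PhiMap t (x1Vec s dsize d) (x0Vec s d) ∧
      blockL1 z ≤ blockL1 (x0Vec s d) := by
  have hne : x0Vec s d ≠ xhatVec s d :=
    x0Vec_ne_xhatVec (i := ⟨0, by omega⟩) hs (by rw [hfirst _ (by simp; omega)]; exact hd)
  have hPhi : PhiMap t (x1Vec s dsize d) (x0Vec s d) = PhiMap t (x1Vec s dsize d) (xhatVec s d) :=
    PhiMap_eq_of_sub_eq_smul t (inner_x1Vec_self hl.le hfirst hs hd) (x0Vec_sub_xhatVec hs hd)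
  have hx0 := blockL1_x0Vec hl.le hfirst
  have hxhat := blockL1_xhatVec hl.le hfirst
  exact ⟨hne, blockSparse_x0Vec, blockSparse_xhatVec hl.le, hx0, hxhat, hPhi,
    xhatVec s d, hne.symm, hPhi.symm, (hxhat.trans hx0.symm).le⟩

/-- Theorem 1.2, sharpness construction — non-uniqueness: `x₀` and `x̂`
are distinct block `s`-sparse vectors with `‖x₀‖_{2,ℐ} = ‖x̂‖_{2,ℐ} = s√d` and
`Φx₀ = Φx̂`, so the `ℓ₂/ℓ₁` minimization subject to `Φz = Φx₀` cannot uniquely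
recover `x₀`. -/
theorem sharpness_nonuniqueness {l : ℕ} (s dsize : ℕ) (d : Fin l → ℕ)
    (hd : 0 < dsize) (hs : 1 ≤ s) (hl : 2 * s < l)
    (hfirst : ∀ i : Fin l, (i : ℕ) < 2 * s → d i = dsize)
    (t : ℝ) (ht0 : 0 < t) (ht4 : t < 4 / 3) :
    x0Vec s d ≠ xhatVec s d ∧
    BlockSparse s (x0Vec s d) ∧ BlockSparse s (xhatVec s d) ∧
    blockL1 (x0Vec s d) = s * Real.sqrt dsize ∧
    blockL1 (xhatVec s d) = s * Real.sqrt dsize ∧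
    PhiMap t (x1Vec s dsize d) (x0Vec s d) = PhiMap t (x1Vec s dsize d) (xhatVec s d) ∧
    ∃ z : BlockVec d, z ≠ x0Vec s d ∧
      PhiMap t (x1Vec s dsize d) z = PhiMap t (x1Vec s dsize d) (x0Vec s d) ∧
      blockL1 z ≤ blockL1 (x0Vec s d) :=
  sharpness_nonuniqueness_general s dsize d hd hs hl hfirst t
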